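/- Let n ≥ 2 be an integer. Then, as the real parameter L → ∞, L^{n+1/2} · ∑_{k=1}^∞ Γ(Lk − n/2) Γ(Lk − (n−1)/2)/(Γ(Lk+1))² · (Lk + n(n−1)/2) converges to ζ(n + 1/2), where ζ is the Riemann zeta function. Equivalently, with C(L,n) = (L²/(4√π (n−1)!)) ∑_{k=1}^∞ Γ(Lk−n/2)Γ(Lk−(n−1)/2)/(Γ(Lk+1))² (Lk + n(n−1)/2), one has lim_{L→∞} L^{n−3/2} C(L,n) = ζ(n+1/2)/(4√π Γ(n)). -/

import Mathlib

/-! With `x = L k`, the `k`-th term of `L^{n+1/2} · gammaSeries n L` is `k^{-(n+1/2)} T(L k)`, where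
`T(x) = x^{n+1/2} Γ(x - n/2) Γ(x - (n-1)/2) (x + n(n-1)/2) / Γ(x+1)²`. Wendel's limit
`Γ(x + a) / (Γ(x) x^a) → 1`, which follows from the log-convexity of `Γ`, gives `T(x) → 1`. Hence `T`
is bounded on a half-line, and dominated convergence for series gives the limit
`∑ k^{-(n+1/2)} = ζ(n+1/2)`. -/

/-- The Riemann zeta function at a real argument, `ζ(x) = ∑_{k≥1} k^{-x}`. -/
noncomputable def zetaReal (x : ℝ) : ℝ := ∑' k : ℕ+, (1 : ℝ) / (k : ℝ) ^ x

/-- The series appearing in the constant `C(L,n)` of Theorem 3(c). -/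
noncomputable def gammaSeries (n : ℕ) (L : ℝ) : ℝ :=
  ∑' k : ℕ+,
    Real.Gamma (L * k - (n : ℝ) / 2) * Real.Gamma (L * k - ((n : ℝ) - 1) / 2) /
        Real.Gamma (L * k + 1) ^ 2 *
      (L * k + n * ((n : ℝ) - 1) / 2)

/-- The constant `C(L,n)` of Theorem 3(c). -/
noncomputable def CLn (n : ℕ) (L : ℝ) : ℝ :=
  L ^ 2 / (4 * Real.sqrt Real.pi * Nat.factorial (n - 1)) * gammaSeries n L

open Filter Set Topology

theorem tendsto_add_const_div_self (c : ℝ) : Tendsto (fun x : ℝ => (x + c) / x) atTop (𝓝 1) := by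
  have h : Tendsto (fun x : ℝ => 1 + c / x) atTop (𝓝 (1 + 0)) :=
    tendsto_const_nhds.add (tendsto_const_nhds.div_atTop tendsto_id)
  rw [add_zero] at h
  refine h.congr' ?_
  filter_upwards [eventually_ne_atTop 0] with x hx
  rw [add_div, div_self hx, add_comm]

theorem tendsto_tsum_mul_comp_mul_atTop {w : ℕ+ → ℝ} (hw : Summable w) {g : ℝ → ℝ} {l : ℝ}
    (hg : Tendsto g atTop (𝓝 l)) :
    Tendsto (fun L : ℝ => ∑' k : ℕ+, w k * g (L * k)) atTop (𝓝 (∑' k : ℕ+, w k * l)) := by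
  obtain ⟨X, hX⟩ := eventually_atTop.1 (hg.norm.eventually (gt_mem_nhds (lt_add_one ‖l‖)))
  refine tendsto_tsum_of_dominated_convergence (hw.norm.mul_right (‖l‖ + 1))
    (fun k => tendsto_const_nhds.mul (hg.comp (tendsto_id.atTop_mul_const (by positivity)))) ?_
  filter_upwards [eventually_ge_atTop (max X 0)] with L hL k
  have hLk : X ≤ L * k := (le_max_left _ _).trans <| hL.trans <|
    le_mul_of_one_le_right ((le_max_right _ _).trans hL) (Nat.one_le_cast.2 k.pos)
  rw [norm_mul]
  exact mul_le_mul_of_nonneg_left (hX _ hLk).le (norm_nonneg _)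

namespace Real

theorem Gamma_add_le_Gamma_mul_rpow {x s : ℝ} (hx : 0 < x) (hs₀ : 0 ≤ s) (hs₁ : s ≤ 1) :
    Gamma (x + s) ≤ Gamma x * x ^ s := by
  have hconv := convexOn_log_Gamma.2 (mem_Ioi.2 (by linarith : 0 < x + 1)) (mem_Ioi.2 hx) hs₀
    (sub_nonneg.2 hs₁) (add_sub_cancel s 1)
  simp only [Function.comp_apply, smul_eq_mul, Gamma_add_one hx.ne',
    log_mul hx.ne' (Gamma_pos_of_pos hx).ne'] at hconv
  rw [show s * (x + 1) + (1 - s) * x = x + s by ring] at hconv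
  have hlog : log (Gamma (x + s)) ≤ log (Gamma x * x ^ s) := by
    rw [log_mul (Gamma_pos_of_pos hx).ne' (rpow_pos_of_pos hx s).ne', log_rpow hx]
    linarith
  exact (log_le_log_iff (Gamma_pos_of_pos (by linarith)) (by positivity)).1 hlog

theorem mul_Gamma_le_Gamma_add_mul_rpow {x s : ℝ} (hx : 0 < x) (hs₀ : 0 ≤ s) (hs₁ : s ≤ 1) :
    x * Gamma x ≤ Gamma (x + s) * (x + s) ^ (1 - s) := by
  have h := Gamma_add_le_Gamma_mul_rpow (by linarith : 0 < x + s) (sub_nonneg.2 hs₁)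
    (by linarith)
  rwa [add_add_sub_cancel, Gamma_add_one hx.ne'] at h

theorem tendsto_Gamma_add_div_Gamma_mul_rpow_of_mem_Icc {s : ℝ} (hs₀ : 0 ≤ s) (hs₁ : s ≤ 1) :
    Tendsto (fun x => Gamma (x + s) / (Gamma x * x ^ s)) atTop (𝓝 1) := by
  have hlower : Tendsto (fun x : ℝ => (x / (x + s)) ^ (1 - s)) atTop (𝓝 1) := by
    simpa using ((tendsto_add_const_div_self s).inv₀ one_ne_zero).rpow_const
      (Or.inr (sub_nonneg.2 hs₁)) (p := 1 - s)
  refine tendsto_of_tendsto_of_tendsto_of_le_of_le' hlower tendsto_const_nhds ?_ ?_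
  · filter_upwards [eventually_gt_atTop 0] with x hx
    rw [div_rpow hx.le (by linarith), div_le_div_iff₀ (by positivity) (by positivity)]
    calc x ^ (1 - s) * (Gamma x * x ^ s) = x * Gamma x := by
          rw [mul_left_comm, ← rpow_add hx, sub_add_cancel, rpow_one, mul_comm]
      _ ≤ Gamma (x + s) * (x + s) ^ (1 - s) := mul_Gamma_le_Gamma_add_mul_rpow hx hs₀ hs₁
  · filter_upwards [eventually_gt_atTop 0] with x hx
    exact div_le_one_of_le₀ (Gamma_add_le_Gamma_mul_rpow hx hs₀ hs₁) (by positivity)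

theorem tendsto_Gamma_add_div_Gamma_mul_rpow_add_one_iff (a : ℝ) :
    Tendsto (fun x => Gamma (x + (a + 1)) / (Gamma x * x ^ (a + 1))) atTop (𝓝 1) ↔
      Tendsto (fun x => Gamma (x + a) / (Gamma x * x ^ a)) atTop (𝓝 1) := by
  have hshift : ∀ᶠ x in atTop, Gamma (x + (a + 1)) / (Gamma x * x ^ (a + 1)) =
      Gamma (x + a) / (Gamma x * x ^ a) * ((x + a) / x) := by
    filter_upwards [eventually_gt_atTop (max 0 (-a))] with x hx
    have hx0 : 0 < x := (le_max_left _ _).trans_lt hx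
    have hxa : x + a ≠ 0 := by linarith [(le_max_right 0 (-a)).trans_lt hx]
    rw [← add_assoc, Gamma_add_one hxa, rpow_add_one hx0.ne']
    field_simp
  rw [tendsto_congr' hshift]
  refine ⟨fun h => ?_, fun h => by simpa using h.mul (tendsto_add_const_div_self a)⟩
  have h' := h.div (tendsto_add_const_div_self a) one_ne_zero
  rw [div_one] at h'
  refine h'.congr' ?_
  filter_upwards [eventually_gt_atTop (max 0 (-a))] with x hx
  have hx0 : 0 < x := (le_max_left _ _).trans_lt hx
  have hxa : x + a ≠ 0 := by linarith [(le_max_right 0 (-a)).trans_lt hx]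
  exact mul_div_cancel_right₀ _ (div_ne_zero hxa hx0.ne')

theorem tendsto_Gamma_add_div_Gamma_mul_rpow_add_int_iff (a : ℝ) (m : ℤ) :
    Tendsto (fun x => Gamma (x + (a + m)) / (Gamma x * x ^ (a + m))) atTop (𝓝 1) ↔
      Tendsto (fun x => Gamma (x + a) / (Gamma x * x ^ a)) atTop (𝓝 1) := by
  induction m using Int.induction_on with
  | zero => simp
  | succ m ih =>
    rw [show a + ((m + 1 : ℤ) : ℝ) = a + ((m : ℤ) : ℝ) + 1 by push_cast; ring,
      tendsto_Gamma_add_div_Gamma_mul_rpow_add_one_iff, ih]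
  | pred m ih =>
    rw [← ih, show a + ((-m : ℤ) : ℝ) = a + ((-m - 1 : ℤ) : ℝ) + 1 by push_cast; ring,
      tendsto_Gamma_add_div_Gamma_mul_rpow_add_one_iff]

theorem tendsto_Gamma_add_div_Gamma_mul_rpow (a : ℝ) :
    Tendsto (fun x => Gamma (x + a) / (Gamma x * x ^ a)) atTop (𝓝 1) := by
  have h := (tendsto_Gamma_add_div_Gamma_mul_rpow_add_int_iff (Int.fract a) ⌊a⌋).2
    (tendsto_Gamma_add_div_Gamma_mul_rpow_of_mem_Icc (Int.fract_nonneg a) (Int.fract_lt_one a).le)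
  rwa [Int.fract_add_floor] at h

theorem tendsto_rpow_mul_Gamma_add_mul_Gamma_add_div_Gamma_add_one_sq (a b c : ℝ) :
    Tendsto (fun x => x ^ (1 - a - b) *
      (Gamma (x + a) * Gamma (x + b) / Gamma (x + 1) ^ 2 * (x + c))) atTop (𝓝 1) := by
  have h := ((tendsto_Gamma_add_div_Gamma_mul_rpow a).mul
    (tendsto_Gamma_add_div_Gamma_mul_rpow b)).mul (tendsto_add_const_div_self c)
  rw [one_mul, one_mul] at h
  refine h.congr' ?_
  filter_upwards [eventually_gt_atTop 0] with x hx
  have hpow : x ^ (1 - a - b) * (x ^ a * x ^ b) = x := by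
    rw [← rpow_add hx, ← rpow_add hx, sub_sub, sub_add_cancel, rpow_one]
  have hG : Gamma x ≠ 0 := (Gamma_pos_of_pos hx).ne'
  rw [Gamma_add_one hx.ne']
  field_simp
  linear_combination -(Gamma (x + a) * Gamma (x + b) * (x + c)) * hpow

end Real

open Real

theorem zetaReal_eq_tsum_rpow_neg (x : ℝ) : zetaReal x = ∑' k : ℕ+, (k : ℝ) ^ (-x) :=
  tsum_congr fun k => by rw [rpow_neg (Nat.cast_nonneg _), one_div]

theorem rpow_sub_three_halves_mul_CLn {n : ℕ} (hn : 1 ≤ n) {L : ℝ} (hL : 0 < L) :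
    L ^ ((n : ℝ) - 3 / 2) * CLn n L =
      L ^ ((n : ℝ) + 1 / 2) * gammaSeries n L / (4 * √π * Gamma n) := by
  obtain ⟨m, rfl⟩ := Nat.exists_eq_add_of_le' hn
  have hpow : L ^ (((m + 1 : ℕ) : ℝ) + 1 / 2) = L ^ (((m + 1 : ℕ) : ℝ) - 3 / 2) * L ^ 2 := by
    rw [← rpow_natCast L 2, ← rpow_add hL]
    congr 1
    push_cast
    ring
  rw [CLn, hpow, Nat.add_sub_cancel, Nat.cast_add_one, Gamma_nat_eq_factorial]
  ring

theorem tendsto_rpow_mul_gammaSeries {n : ℕ} (hn : 1 ≤ n) :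
    Tendsto (fun L : ℝ => L ^ ((n : ℝ) + 1 / 2) * gammaSeries n L) atTop
      (𝓝 (zetaReal ((n : ℝ) + 1 / 2))) := by
  have hsum : Summable fun k : ℕ+ => (k : ℝ) ^ (-((n : ℝ) + 1 / 2)) :=
    (summable_nat_rpow.2 (by linarith [(Nat.one_le_cast.2 hn : (1 : ℝ) ≤ n)])).subtype _
  have hterm : Tendsto (fun x : ℝ => x ^ ((n : ℝ) + 1 / 2) * (Gamma (x - (n : ℝ) / 2) *
      Gamma (x - ((n : ℝ) - 1) / 2) / Gamma (x + 1) ^ 2 * (x + n * ((n : ℝ) - 1) / 2)))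
      atTop (𝓝 1) := by
    have h := tendsto_rpow_mul_Gamma_add_mul_Gamma_add_div_Gamma_add_one_sq
      (-((n : ℝ) / 2)) (-(((n : ℝ) - 1) / 2)) (n * ((n : ℝ) - 1) / 2)
    rw [show 1 - -((n : ℝ) / 2) - -(((n : ℝ) - 1) / 2) = n + 1 / 2 by ring] at h
    simpa only [← sub_eq_add_neg] using h
  have h := tendsto_tsum_mul_comp_mul_atTop hsum hterm
  simp only [mul_one, ← zetaReal_eq_tsum_rpow_neg] at h
  refine h.congr' ?_
  filter_upwards [eventually_ge_atTop 0] with L hL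
  rw [gammaSeries, ← tsum_mul_left]
  refine tsum_congr fun k => ?_
  have hk : (0 : ℝ) < k := Nat.cast_pos.2 k.pos
  rw [mul_rpow hL hk.le, rpow_neg hk.le]
  field_simp

/-- Remark (d) after Theorem 3: as `L → ∞`,
`L^{n+1/2} ∑_{k≥1} Γ(Lk-n/2)Γ(Lk-(n-1)/2)/Γ(Lk+1)² (Lk+n(n-1)/2) → ζ(n+1/2)`;
equivalently `L^{n-3/2} C(L,n) → ζ(n+1/2)/(4√π Γ(n))`. -/
theorem gamma_series_asymptotics
    (n : ℕ) (hn : 2 ≤ n) :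
    Filter.Tendsto (fun L : ℝ => L ^ ((n : ℝ) + 1 / 2) * gammaSeries n L)
        Filter.atTop (nhds (zetaReal ((n : ℝ) + 1 / 2)))
    ∧ Filter.Tendsto (fun L : ℝ => L ^ ((n : ℝ) - 3 / 2) * CLn n L)
        Filter.atTop
        (nhds (zetaReal ((n : ℝ) + 1 / 2) /
          (4 * Real.sqrt Real.pi * Real.Gamma (n : ℝ)))) := by
  have hseries := tendsto_rpow_mul_gammaSeries (by omega : 1 ≤ n)
  refine ⟨hseries, (hseries.div_const _).congr' ?_⟩
  filter_upwards [eventually_gt_atTop 0] with L hL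
  exact (rpow_sub_three_halves_mul_CLn (by omega) hL).symm
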